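/- Discrete nonlocal phase-field equation (variation of the fracture functional with respect to the phase field, Eq. (92)): in the discrete nonlocal setting, let g : I × I → ℝ^d, ω : I × I → ℝ, fixed tensile strain-energy values ψ⁺ : I → ℝ, a critical energy release rate g_c > 0 and a length scale ℓ > 0. For a phase field s : I → ℝ define the nonlocal gradient ∇̃s_i := ∑_{j∈S(i)} ω(i,j)·(s(j)−s(i))·g(i,j)·V(j) ∈ ℝ^d and the functional 𝓕(s) := ∑_{i∈I} ( (1−s(i))²·ψ⁺(i) + g_c·( s(i)²/(2ℓ) + (ℓ/2)·⟪∇̃s_i, ∇̃s_i⟫ ) )·V(i). Then for every variation δ : I → ℝ, (d/dt)𝓕(s + t·δ)|_{t=0} = ∑_{i∈I} ( −2·(1−s(i))·ψ⁺(i) + g_c·s(i)/ℓ + g_c·ℓ·( ∑_{j∈S'(i)} ω(j,i)·⟪∇̃s_j, g(j,i)⟫·V(j) − ∑_{j∈S(i)} ω(i,j)·⟪∇̃s_i, g(i,j)⟫·V(j) ) )·δ(i)·V(i). Consequently s is a critical point if and only if for every i: s(i)/ℓ − 2·(ψ⁺(i)/g_c)·(1−s(i)) + ∑_{j∈S'(i)}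 ω(j,i)·ℓ·⟪∇̃s_j, g(j,i)⟫·V(j) − ∑_{j∈S(i)} ω(i,j)·ℓ·⟪∇̃s_i, g(i,j)⟫·V(j) = 0. -/

import Mathlib

open Finset Matrix

/-!
Since `s ↦ ∇̃s` is linear, `t ↦ 𝓕(s + t • δ)` is a quadratic polynomial and its derivative at `0`
is the linear coefficient. The gradient part of that coefficient, `∑ᵢ ⟪∇̃sᵢ, ∇̃δᵢ⟫ Vᵢ`, becomes
`∑ᵢ (∇̃*(∇̃s))ᵢ δᵢ Vᵢ` after exchanging the double sum over the pairs `j ∈ S(i)` (summation by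
parts), with `∇̃*` the `V`-weighted adjoint. Testing the first variation against the indicators
of single points, where `Vᵢ ≠ 0`, gives the pointwise equation.
-/

section NonlocalGradient

variable {I n : Type*} [Fintype I] [Fintype n]
  (S : I → Finset I) (ω : I → I → ℝ) (g : I → I → n → ℝ) (V : I → ℝ)

def nonlocalGrad : (I → ℝ) →ₗ[ℝ] I → n → ℝ where
  toFun s i := ∑ j ∈ S i, (ω i j * (s j - s i) * V j) • g i j
  map_add' s t := by
    ext i : 1
    simp only [Pi.add_apply, ← Finset.sum_add_distrib, ← add_smul]
    refine Finset.sum_congr rfl fun j _ => ?_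
    ring_nf
  map_smul' c s := by
    ext i : 1
    simp only [Pi.smul_apply, smul_eq_mul, Finset.smul_sum, RingHom.id_apply, smul_smul]
    refine Finset.sum_congr rfl fun j _ => ?_
    ring_nf

/-- The adjoint of `nonlocalGrad` for the inner products weighted by `V`; the first sum runs over
the dual support `S'(i)`. -/
def nonlocalGradAdjoint [DecidableEq I] (u : I → n → ℝ) (i : I) : ℝ :=
  ∑ j ∈ univ.filter (fun j => i ∈ S j), ω j i * (u j ⬝ᵥ g j i) * V j
    - ∑ j ∈ S i, ω i j * (u i ⬝ᵥ g i j) * V j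

theorem sum_dotProduct_nonlocalGrad_mul [DecidableEq I] (u : I → n → ℝ) (δ : I → ℝ) :
    ∑ i, (u i ⬝ᵥ nonlocalGrad S ω g V δ i) * V i
      = ∑ i, nonlocalGradAdjoint S ω g V u i * δ i * V i := by
  have hswap : ∑ i, ∑ j ∈ S i, ω i j * (u i ⬝ᵥ g i j) * V j * δ j * V i
      = ∑ j, ∑ i ∈ univ.filter (fun i => j ∈ S i), ω i j * (u i ⬝ᵥ g i j) * V j * δ j * V i :=
    Finset.sum_comm' fun i j => by simp
  calc ∑ i, (u i ⬝ᵥ nonlocalGrad S ω g V δ i) * V i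
      = ∑ i, ∑ j ∈ S i, ω i j * (u i ⬝ᵥ g i j) * V j * δ j * V i
        - ∑ i, (∑ j ∈ S i, ω i j * (u i ⬝ᵥ g i j) * V j) * δ i * V i := by
        rw [← Finset.sum_sub_distrib]
        refine Finset.sum_congr rfl fun i _ => ?_
        simp only [nonlocalGrad, LinearMap.coe_mk, AddHom.coe_mk, dotProduct_sum, dotProduct_smul,
          smul_eq_mul, Finset.sum_mul, ← Finset.sum_sub_distrib]
        refine Finset.sum_congr rfl fun j _ => ?_
        ring
    _ = ∑ i, nonlocalGradAdjoint S ω g V u i * δ i * V i := by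
        rw [hswap, ← Finset.sum_sub_distrib]
        refine Finset.sum_congr rfl fun j _ => ?_
        simp only [nonlocalGradAdjoint, sub_mul, Finset.sum_mul]
        congr 1
        exact Finset.sum_congr rfl fun i _ => by ring

end NonlocalGradient

section FirstVariation

variable {I n : Type*} [Fintype I] [Fintype n]

theorem hasDerivAt_dotProduct_add_smul_self (u v : n → ℝ) :
    HasDerivAt (fun t : ℝ => (u + t • v) ⬝ᵥ (u + t • v)) (2 * (u ⬝ᵥ v)) 0 := by
  have hexpand : (fun t : ℝ => (u + t • v) ⬝ᵥ (u + t • v))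
      = fun t => u ⬝ᵥ u + t * (2 * (u ⬝ᵥ v)) + t ^ 2 * (v ⬝ᵥ v) := by
    ext t
    simp only [add_dotProduct, dotProduct_add, smul_dotProduct, dotProduct_smul, smul_eq_mul,
      dotProduct_comm v u]
    ring
  rw [hexpand]
  simpa using (((hasDerivAt_id (0 : ℝ)).mul_const (2 * (u ⬝ᵥ v))).const_add (u ⬝ᵥ u)).fun_add
    ((hasDerivAt_pow 2 (0 : ℝ)).mul_const (v ⬝ᵥ v))

noncomputable def phaseFieldEnergy (G : (I → ℝ) →ₗ[ℝ] I → n → ℝ) (V ψ : I → ℝ) (gc ℓ : ℝ)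
    (s : I → ℝ) : ℝ :=
  ∑ i, ((1 - s i) ^ 2 * ψ i + gc * (s i ^ 2 / (2 * ℓ) + (ℓ / 2) * (G s i ⬝ᵥ G s i))) * V i

theorem hasDerivAt_phaseFieldEnergy_add_smul (G : (I → ℝ) →ₗ[ℝ] I → n → ℝ)
    (V ψ : I → ℝ) (gc ℓ : ℝ) (s δ : I → ℝ) :
    HasDerivAt (fun t : ℝ => phaseFieldEnergy G V ψ gc ℓ (s + t • δ))
      (∑ i, ((-2 * (1 - s i) * ψ i + gc * s i / ℓ) * δ i
        + gc * ℓ * (G s i ⬝ᵥ G δ i)) * V i) 0 := by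
  simp only [phaseFieldEnergy, map_add, map_smul, Pi.add_apply, Pi.smul_apply, smul_eq_mul]
  refine HasDerivAt.fun_sum fun i _ => ?_
  have hline : HasDerivAt (fun t : ℝ => s i + t * δ i) (δ i) 0 := by
    simpa using ((hasDerivAt_id (0 : ℝ)).mul_const (δ i)).const_add (s i)
  have hdot := hasDerivAt_dotProduct_add_smul_self (G s i) (G δ i)
  refine (((((hline.const_sub 1).fun_pow 2).mul_const (ψ i)).fun_add
    ((((hline.fun_pow 2).div_const (2 * ℓ)).fun_add (hdot.const_mul (ℓ / 2))).const_mul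
      gc)).mul_const (V i)).congr_deriv ?_
  simp only [zero_mul, add_zero, Nat.cast_ofNat, Nat.add_one_sub_one, pow_one]
  ring

theorem forall_sum_mul_mul_eq_zero_iff {V c : I → ℝ} (hV : ∀ i, V i ≠ 0) :
    (∀ δ : I → ℝ, ∑ i, c i * δ i * V i = 0) ↔ ∀ i, c i = 0 := by
  classical
  refine ⟨fun h i => ?_, fun h δ => by simp [h]⟩
  simpa [Pi.single_apply, hV i] using h (Pi.single i 1)

end FirstVariation

theorem nonlocal_phase_field_variational_general {I : Type*} [Fintype I] [DecidableEq I] {d : ℕ}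
    (V : I → ℝ) (hV : ∀ i, 0 < V i)
    (S : I → Finset I)
    (g : I → I → Fin d → ℝ) (ω : I → I → ℝ)
    (ψp : I → ℝ) (gc ℓ : ℝ) (hgc : 0 < gc)
    (grad : (I → ℝ) → I → Fin d → ℝ)
    (hgrad : ∀ s i, grad s i = ∑ j ∈ S i, (ω i j * (s j - s i) * V j) • g i j)
    (F : (I → ℝ) → ℝ)
    (hF : ∀ s, F s = ∑ i, ((1 - s i) ^ 2 * ψp i
        + gc * (s i ^ 2 / (2 * ℓ) + (ℓ / 2) * (grad s i ⬝ᵥ grad s i))) * V i)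
    (s : I → ℝ) :
    (∀ δ : I → ℝ,
        HasDerivAt (fun t : ℝ => F (s + t • δ))
          (∑ i, (-2 * (1 - s i) * ψp i + gc * s i / ℓ
            + gc * ℓ * ((∑ j ∈ univ.filter (fun j => i ∈ S j),
                  ω j i * (grad s j ⬝ᵥ g j i) * V j)
              - ∑ j ∈ S i, ω i j * (grad s i ⬝ᵥ g i j) * V j)) * δ i * V i) 0)
    ∧ ((∀ δ : I → ℝ, deriv (fun t : ℝ => F (s + t • δ)) 0 = 0)
        ↔ ∀ i, s i / ℓ - 2 * (ψp i / gc) * (1 - s i)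
              + (∑ j ∈ univ.filter (fun j => i ∈ S j),
                  ω j i * ℓ * (grad s j ⬝ᵥ g j i) * V j)
              - (∑ j ∈ S i, ω i j * ℓ * (grad s i ⬝ᵥ g i j) * V j) = 0) := by
  obtain rfl : grad = nonlocalGrad S ω g V := funext fun s => funext (hgrad s)
  obtain rfl : F = phaseFieldEnergy (nonlocalGrad S ω g V) V ψp gc ℓ := funext hF
  set c : I → ℝ := fun i => -2 * (1 - s i) * ψp i + gc * s i / ℓ
    + gc * ℓ * nonlocalGradAdjoint S ω g V (nonlocalGrad S ω g V s) i
  have hfirst (δ : I → ℝ) :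
      HasDerivAt (fun t : ℝ => phaseFieldEnergy (nonlocalGrad S ω g V) V ψp gc ℓ (s + t • δ))
        (∑ i, c i * δ i * V i) 0 := by
    refine (hasDerivAt_phaseFieldEnergy_add_smul _ V ψp gc ℓ s δ).congr_deriv ?_
    simp only [c, add_mul, Finset.sum_add_distrib, mul_assoc (gc * ℓ), ← Finset.mul_sum,
      ← sum_dotProduct_nonlocalGrad_mul]
  have hc (i : I) : c i = gc * (s i / ℓ - 2 * (ψp i / gc) * (1 - s i)
      + (∑ j ∈ univ.filter (fun j => i ∈ S j),
          ω j i * ℓ * (nonlocalGrad S ω g V s j ⬝ᵥ g j i) * V j)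
      - (∑ j ∈ S i, ω i j * ℓ * (nonlocalGrad S ω g V s i ⬝ᵥ g i j) * V j)) := by
    simp only [c, nonlocalGradAdjoint, mul_sub, mul_add, Finset.mul_sum]
    field_simp
    ring_nf
  refine ⟨hfirst, ?_⟩
  simp only [fun δ => (hfirst δ).deriv, forall_sum_mul_mul_eq_zero_iff fun i => (hV i).ne', hc,
    mul_eq_zero, hgc.ne', false_or]

/-- Discrete nonlocal phase-field equation: variation of the fracture functional
with respect to the phase field (Eq. (92)). -/
theorem nonlocal_phase_field_variational {I : Type*} [Fintype I] [DecidableEq I] {d : ℕ}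
    (V : I → ℝ) (hV : ∀ i, 0 < V i)
    (S : I → Finset I)
    (g : I → I → Fin d → ℝ) (ω : I → I → ℝ)
    (ψp : I → ℝ) (gc ℓ : ℝ) (hgc : 0 < gc) (hℓ : 0 < ℓ)
    (grad : (I → ℝ) → I → Fin d → ℝ)
    (hgrad : ∀ s i, grad s i = ∑ j ∈ S i, (ω i j * (s j - s i) * V j) • g i j)
    (F : (I → ℝ) → ℝ)
    (hF : ∀ s, F s = ∑ i, ((1 - s i) ^ 2 * ψp i
        + gc * (s i ^ 2 / (2 * ℓ) + (ℓ / 2) * (grad s i ⬝ᵥ grad s i))) * V i)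
    (s : I → ℝ) :
    (∀ δ : I → ℝ,
        HasDerivAt (fun t : ℝ => F (s + t • δ))
          (∑ i, (-2 * (1 - s i) * ψp i + gc * s i / ℓ
            + gc * ℓ * ((∑ j ∈ univ.filter (fun j => i ∈ S j),
                  ω j i * (grad s j ⬝ᵥ g j i) * V j)
              - ∑ j ∈ S i, ω i j * (grad s i ⬝ᵥ g i j) * V j)) * δ i * V i) 0)
    ∧ ((∀ δ : I → ℝ, deriv (fun t : ℝ => F (s + t • δ)) 0 = 0)
        ↔ ∀ i, s i / ℓ - 2 * (ψp i / gc) * (1 - s i)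
              + (∑ j ∈ univ.filter (fun j => i ∈ S j),
                  ω j i * ℓ * (grad s j ⬝ᵥ g j i) * V j)
              - (∑ j ∈ S i, ω i j * ℓ * (grad s i ⬝ᵥ g i j) * V j) = 0) :=
  nonlocal_phase_field_variational_general V hV S g ω ψp gc ℓ hgc grad hgrad F hF s
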